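/- arXiv:1601.03701 — 4 statements merged into one kernel-verified Lean document; each statement's English description precedes it below -/
import Mathlib

section
/- (Reverse triangle inequality / inertial twin paradox in Minkowski geometry.) Let x, y, z ∈ ℝ⁴ with x and z on the time axis (spatial coordinates zero), x₄ < z₄, and y not on the time axis. Suppose the segments from x to y and from y to z are both timelike, i.e., time(x,y) > dist(x,y) and time(y,z) > dist(y,z), with x₄ < y₄ < z₄. Then the proper time along the broken path is strictly less than along the straight path: √(time(x,y)² − dist(x,y)²) + √(time(y,z)² − dist(y,z)²) < time(x,z). -/
noncomputable def mtime (x y : Fin 4 → ℝ) : ℝ := |x 3 - y 3|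

noncomputable def mdist (x y : Fin 4 → ℝ) : ℝ :=
  Real.sqrt ((x 0 - y 0) ^ 2 + (x 1 - y 1) ^ 2 + (x 2 - y 2) ^ 2)

def IsAffineMap4 (P : (Fin 4 → ℝ) → (Fin 4 → ℝ)) : Prop :=
  ∃ (L : (Fin 4 → ℝ) →ₗ[ℝ] (Fin 4 → ℝ)) (b : Fin 4 → ℝ), ∀ x, P x = L x + b

def PreservesMinkowski (P : (Fin 4 → ℝ) → (Fin 4 → ℝ)) : Prop :=
  ∀ x y, mtime x y ^ 2 - mdist x y ^ 2 = mtime (P x) (P y) ^ 2 - mdist (P x) (P y) ^ 2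

def IsPoincare (P : (Fin 4 → ℝ) → (Fin 4 → ℝ)) : Prop :=
  IsAffineMap4 P ∧ Function.Bijective P ∧ PreservesMinkowski P

noncomputable def Qmink (x : Fin 4 → ℝ) : ℝ := x 3 ^ 2 - x 0 ^ 2 - x 1 ^ 2 - x 2 ^ 2

noncomputable def Bmink (x y : Fin 4 → ℝ) : ℝ := x 3 * y 3 - x 0 * y 0 - x 1 * y 1 - x 2 * y 2

def e4 : Fin 4 → ℝ := fun i => if i = 3 then 1 else 0

def timeAxis : Set (Fin 4 → ℝ) := {x | x 0 = 0 ∧ x 1 = 0 ∧ x 2 = 0}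

theorem reverse_triangle_inequality (x y z : Fin 4 → ℝ)
    (hx : x ∈ timeAxis) (hz : z ∈ timeAxis) (hxz : x 3 < z 3)
    (hy : y ∉ timeAxis)
    (hxy : mtime x y > mdist x y) (hyz : mtime y z > mdist y z)
    (hx4 : x 3 < y 3) (hy4 : y 3 < z 3) :
    Real.sqrt (mtime x y ^ 2 - mdist x y ^ 2) + Real.sqrt (mtime y z ^ 2 - mdist y z ^ 2)
      < mtime x z := by
  obtain ⟨hx0, hx1, hx2⟩ := hx
  obtain ⟨hz0, hz1, hz2⟩ := hz
  have hyn : ¬ (y 0 = 0 ∧ y 1 = 0 ∧ y 2 = 0) := hy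
  have hd2 : (0:ℝ) < y 0 ^ 2 + y 1 ^ 2 + y 2 ^ 2 := by
    by_contra h
    push_neg at h
    apply hyn
    constructor
    · nlinarith [sq_nonneg (y 0), sq_nonneg (y 1), sq_nonneg (y 2)]
    constructor
    · nlinarith [sq_nonneg (y 0), sq_nonneg (y 1), sq_nonneg (y 2)]
    · nlinarith [sq_nonneg (y 0), sq_nonneg (y 1), sq_nonneg (y 2)]
  have hdx : mdist x y ^ 2 = y 0 ^ 2 + y 1 ^ 2 + y 2 ^ 2 := by
    rw [mdist, Real.sq_sqrt (by nlinarith [sq_nonneg (x 0 - y 0), sq_nonneg (x 1 - y 1), sq_nonneg (x 2 - y 2)])]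
    rw [hx0, hx1, hx2]; ring
  have hdz : mdist y z ^ 2 = y 0 ^ 2 + y 1 ^ 2 + y 2 ^ 2 := by
    rw [mdist, Real.sq_sqrt (by nlinarith [sq_nonneg (y 0 - z 0), sq_nonneg (y 1 - z 1), sq_nonneg (y 2 - z 2)])]
    rw [hz0, hz1, hz2]; ring
  have htx : mtime x y = y 3 - x 3 := by rw [mtime, abs_sub_comm, abs_of_pos (by linarith)]
  have htz : mtime y z = z 3 - y 3 := by rw [mtime, abs_sub_comm, abs_of_pos (by linarith)]
  have htxz : mtime x z = z 3 - x 3 := by rw [mtime, abs_sub_comm, abs_of_pos (by linarith)]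
  have h1 : Real.sqrt (mtime x y ^ 2 - mdist x y ^ 2) < y 3 - x 3 := by
    have hlt : mtime x y ^ 2 - mdist x y ^ 2 < (y 3 - x 3) ^ 2 := by
      rw [htx, hdx]; linarith
    calc Real.sqrt (mtime x y ^ 2 - mdist x y ^ 2)
        < Real.sqrt ((y 3 - x 3) ^ 2) := Real.sqrt_lt_sqrt (by have hm : (0:ℝ) ≤ mdist x y := Real.sqrt_nonneg _; nlinarith [hxy]) hlt
      _ = y 3 - x 3 := Real.sqrt_sq (by linarith)
  have h2 : Real.sqrt (mtime y z ^ 2 - mdist y z ^ 2) < z 3 - y 3 := by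
    have hlt : mtime y z ^ 2 - mdist y z ^ 2 < (z 3 - y 3) ^ 2 := by
      rw [htz, hdz]; linarith
    calc Real.sqrt (mtime y z ^ 2 - mdist y z ^ 2)
        < Real.sqrt ((z 3 - y 3) ^ 2) := Real.sqrt_lt_sqrt (by have hm : (0:ℝ) ≤ mdist y z := Real.sqrt_nonneg _; nlinarith [hyz]) hlt
      _ = z 3 - y 3 := Real.sqrt_sq (by linarith)
  rw [htxz]; linarith
end

section
/- (No faster-than-light inertial observers.) Suppose f : ℝ⁴ → ℝ⁴ is a bijection such that for all x, y: dist(x,y) = time(x,y) if and only if dist(f x, f y) = time(f x, f y) (f preserves light-like separation in both directions). If ℓ is a line through the origin contained in the image under f⁻¹ of the time axis, i.e., f maps ℓ onto the time axis, then every nonzero direction vector u of ℓ satisfies u₁² + u₂² + u₃² < u₄² OR ℓ is the time axis; in particular, u₁² + u₂² + u₃² ≤ u₄² with equality impossible, so the speed |spatial part of u| / |u₄| is strictly less than 1. -/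
lemma mdist_eq_mtime_iff {x y : Fin 4 → ℝ} :
    mdist x y = mtime x y ↔
      (x 0 - y 0) ^ 2 + (x 1 - y 1) ^ 2 + (x 2 - y 2) ^ 2 = (x 3 - y 3) ^ 2 := by
  rw [mdist, mtime, ← Real.sqrt_sq_eq_abs]
  exact Real.sqrt_inj (by positivity) (sq_nonneg _)

lemma eq_of_mem_timeAxis_of_mdist_eq_mtime {x y : Fin 4 → ℝ} (hx : x ∈ timeAxis)
    (hy : y ∈ timeAxis) (h : mdist x y = mtime x y) : x = y := by
  obtain ⟨hx0, hx1, hx2⟩ := hx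
  obtain ⟨hy0, hy1, hy2⟩ := hy
  have h3 : (x 3 - y 3) ^ 2 = 0 := by
    rw [← mdist_eq_mtime_iff.1 h, hx0, hx1, hx2, hy0, hy1, hy2]
    ring
  funext i
  fin_cases i
  exacts [hx0.trans hy0.symm, hx1.trans hy1.symm, hx2.trans hy2.symm,
    sub_eq_zero.1 (pow_eq_zero_iff two_ne_zero |>.1 h3)]

lemma exists_mem_timeAxis_mdist_eq_mtime (q : Fin 4 → ℝ) :
    ∃ w ∈ timeAxis, mdist q w = mtime q w := by
  set s := Real.sqrt (q 0 ^ 2 + q 1 ^ 2 + q 2 ^ 2)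
  refine ⟨![0, 0, 0, q 3 - s], ⟨rfl, rfl, rfl⟩, mdist_eq_mtime_iff.2 ?_⟩
  simp only [Matrix.cons_val, sub_zero, sub_sub_cancel]
  rw [Real.sq_sqrt (by positivity)]

lemma exists_spatial_orthogonal (u : Fin 4 → ℝ) :
    ∃ p : Fin 4 → ℝ, p 3 = 0 ∧ 0 < p 0 ^ 2 + p 1 ^ 2 + p 2 ^ 2 ∧
      p 0 * u 0 + p 1 * u 1 + p 2 * u 2 = 0 := by
  by_cases hu : u 0 ^ 2 + u 1 ^ 2 = 0
  · have hu0 : u 0 = 0 := by nlinarith [sq_nonneg (u 0), sq_nonneg (u 1)]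
    exact ⟨![1, 0, 0, 0], rfl, by simp, by simp [hu0]⟩
  · refine ⟨![-u 1, u 0, 0, 0], rfl, ?_, ?_⟩
    · simp only [Matrix.cons_val]
      have := lt_of_le_of_ne (by positivity) (Ne.symm hu)
      linarith [neg_sq (u 1)]
    · simp only [Matrix.cons_val]
      ring

lemma exists_forall_mdist_smul_ne_mtime {u : Fin 4 → ℝ}
    (h : u 3 ^ 2 < u 0 ^ 2 + u 1 ^ 2 + u 2 ^ 2) :
    ∃ p : Fin 4 → ℝ, ∀ t : ℝ, mdist p (t • u) ≠ mtime p (t • u) := by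
  obtain ⟨p, hp3, hp, horth⟩ := exists_spatial_orthogonal u
  refine ⟨p, fun t ht => ?_⟩
  have ht := mdist_eq_mtime_iff.1 ht
  simp only [Pi.smul_apply, smul_eq_mul, hp3] at ht
  have hzero : (p 0 ^ 2 + p 1 ^ 2 + p 2 ^ 2) +
      t ^ 2 * ((u 0 ^ 2 + u 1 ^ 2 + u 2 ^ 2) - u 3 ^ 2) = 0 := by
    linear_combination ht + 2 * t * horth
  nlinarith [mul_nonneg (sq_nonneg t) (sub_nonneg.2 h.le)]

theorem no_faster_than_light_observers
    (f : (Fin 4 → ℝ) → (Fin 4 → ℝ)) (hBij : Function.Bijective f)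
    (hLight : ∀ x y, mdist x y = mtime x y ↔ mdist (f x) (f y) = mtime (f x) (f y))
    (u : Fin 4 → ℝ) (hu : u ≠ 0)
    (hmap : f '' (Set.range fun t : ℝ => t • u) = timeAxis) :
    u 0 ^ 2 + u 1 ^ 2 + u 2 ^ 2 < u 3 ^ 2 ∨
      (Set.range fun t : ℝ => t • u) = timeAxis := by
  have mem_line (t : ℝ) : f (t • u) ∈ timeAxis := hmap ▸ Set.mem_image_of_mem f ⟨t, rfl⟩
  rcases lt_trichotomy (u 0 ^ 2 + u 1 ^ 2 + u 2 ^ 2) (u 3 ^ 2) with h | h | h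
  · exact Or.inl h
  · have hlight : mdist ((1 : ℝ) • u) ((0 : ℝ) • u) = mtime ((1 : ℝ) • u) ((0 : ℝ) • u) :=
      mdist_eq_mtime_iff.2 (by simpa using h)
    have hfeq := eq_of_mem_timeAxis_of_mdist_eq_mtime (mem_line 1) (mem_line 0)
      ((hLight _ _).1 hlight)
    exact absurd (by simpa using hBij.1 hfeq) hu
  · obtain ⟨p, hp⟩ := exists_forall_mdist_smul_ne_mtime h
    obtain ⟨w, hw, hpw⟩ := exists_mem_timeAxis_mdist_eq_mtime (f p)
    rw [← hmap] at hw
    obtain ⟨_, ⟨t, rfl⟩, rfl⟩ := hw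
    exact absurd ((hLight p (t • u)).2 hpw) (hp t)
end

section
/- (Symmetry of time dilation under Lorentz transformations.) Let L : ℝ⁴ → ℝ⁴ be a linear bijection preserving the Minkowski form with (L(0,0,0,1))₄ > 0. Then |(L(0,0,0,1))₄| = |(L⁻¹(0,0,0,1))₄|: the time-dilation factor that one observer assigns to the other equals the factor the other assigns back, i.e., AxSymTime holds automatically for Lorentz transformations. -/
theorem symmetry_of_time_dilation
    (L : (Fin 4 → ℝ) ≃ₗ[ℝ] (Fin 4 → ℝ))
    (hQ : ∀ x, Qmink (L x) = Qmink x)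
    (hOrtho : (L e4) 3 > 0) :
    |(L e4) 3| = |(L.symm e4) 3| := by
  have key : ∀ x y, Bmink (L x) (L y) = Bmink x y := by
    intro x y
    have h1 := hQ (x + y)
    have h2 := hQ x
    have h3 := hQ y
    simp only [map_add] at h1
    simp only [Qmink, Bmink, Pi.add_apply] at h1 h2 h3 ⊢
    nlinarith [h1, h2, h3]
  have h := key (L.symm e4) e4
  rw [L.apply_symm_apply] at h
  simp only [Bmink, e4] at h
  norm_num [show ((0:Fin 4) ≠ 3) from by decide, show ((1:Fin 4) ≠ 3) from by decide, show ((2:Fin 4) ≠ 3) from by decide] at h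
  rw [h]
end

section
/- (Affine maps preserving the light cone relation scale the Minkowski form by a constant.) Let A : ℝ⁴ → ℝ⁴ be an affine bijection such that for all x, y: time(x,y) = dist(x,y) implies time(Ax,Ay) = dist(Ax,Ay). Then there exists a constant k > 0 such that for all x, y: time(Ax,Ay)² − dist(Ax,Ay)² = k·(time(x,y)² − dist(x,y)²). In particular, A is a Poincaré transformation composed with a dilation, consistent with the claim that without symmetry axioms, worldview transformations are determined only up to change of units. -/
/-!
Let `Q = Qmink` and `L` the linear part of the map. Write `z = s + t • e4` with `s` spatial of
Euclidean length `r`. The quadratic polynomial `t ↦ Q (L (s + t • e4))` vanishes at the two null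
parameters `t = ± r`, which forces it to be `Q (L e4) * (t ^ 2 - r ^ 2) = Q (L e4) * Q z`.
The factor `k = Q (L e4)` is nonzero because `L` is onto, and it cannot be negative: the plane
spanned by two spatial axes contains a nonzero `z` with `L z` spatial, so `k * Q z > 0` would
contradict `Q (L z) ≤ 0`.
-/

theorem mtime_sq_sub_mdist_sq (x y : Fin 4 → ℝ) :
    mtime x y ^ 2 - mdist x y ^ 2 = Qmink (x - y) := by
  rw [mtime, mdist, sq_abs, Real.sq_sqrt (by positivity), Qmink]
  simp only [Pi.sub_apply]
  ring

theorem mtime_eq_mdist_iff (x y : Fin 4 → ℝ) : mtime x y = mdist x y ↔ Qmink (x - y) = 0 := by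
  have htime : 0 ≤ mtime x y := abs_nonneg _
  have hdist : 0 ≤ mdist x y := Real.sqrt_nonneg _
  rw [← sq_eq_sq₀ htime hdist, ← sub_eq_zero, mtime_sq_sub_mdist_sq]

theorem Qmink_add_smul (a b : Fin 4 → ℝ) (t : ℝ) :
    Qmink (a + t • b) = Qmink a + 2 * t * Bmink a b + t ^ 2 * Qmink b := by
  simp only [Qmink, Bmink, Pi.add_apply, Pi.smul_apply, smul_eq_mul]
  ring

theorem Qmink_le_sq (w : Fin 4 → ℝ) : Qmink w ≤ w 3 ^ 2 := by
  rw [Qmink]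
  nlinarith [sq_nonneg (w 0), sq_nonneg (w 1), sq_nonneg (w 2)]

section

variable (L : (Fin 4 → ℝ) →ₗ[ℝ] (Fin 4 → ℝ))

theorem Qmink_map_eq_of_preserves_null (hL : ∀ v, Qmink v = 0 → Qmink (L v) = 0)
    (z : Fin 4 → ℝ) : Qmink (L z) = Qmink (L e4) * Qmink z := by
  set s := z - z 3 • e4 with hs_def
  set r := √(z 0 ^ 2 + z 1 ^ 2 + z 2 ^ 2) with hr_def
  have hs_time : ∀ t, Qmink (s + t • e4) = t ^ 2 - r ^ 2 := by
    intro t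
    rw [hr_def, Real.sq_sqrt (by positivity)]
    simp only [s, Qmink, e4, Pi.add_apply, Pi.sub_apply, Pi.smul_apply, smul_eq_mul, Fin.reduceEq,
      ↓reduceIte]
    ring
  have hz : z = s + z 3 • e4 := by rw [hs_def, sub_add_cancel]
  have hnull : ∀ t, t ^ 2 = r ^ 2 →
      Qmink (L s) + 2 * t * Bmink (L s) (L e4) + t ^ 2 * Qmink (L e4) = 0 := by
    intro t ht
    rw [← Qmink_add_smul, ← map_smul, ← map_add]
    exact hL _ (by rw [hs_time, ht, sub_self])
  have hplus := hnull r rfl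
  have hminus := hnull (-r) (neg_sq r)
  have hB : r * Bmink (L s) (L e4) = 0 := by linear_combination (hplus - hminus) / 4
  have hB' : Bmink (L s) (L e4) = 0 := by
    rcases mul_eq_zero.1 hB with hr | hB
    · have hsq : z 0 ^ 2 + z 1 ^ 2 + z 2 ^ 2 = 0 := by
        rwa [hr_def, Real.sqrt_eq_zero (by positivity)] at hr
      obtain ⟨h0, h1, h2⟩ : z 0 = 0 ∧ z 1 = 0 ∧ z 2 = 0 := by
        refine ⟨?_, ?_, ?_⟩ <;> nlinarith [sq_nonneg (z 0), sq_nonneg (z 1), sq_nonneg (z 2)]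
      have hs0 : s = 0 := by
        funext i
        fin_cases i <;> simp [s, e4, h0, h1, h2]
      simp [hs0, Bmink]
    · exact hB
  rw [hz, map_add, map_smul, Qmink_add_smul, hs_time, hB']
  linear_combination (hplus + hminus) / 2

theorem nonneg_of_Qmink_map_eq_mul {k : ℝ} (hk : ∀ z, Qmink (L z) = k * Qmink z) : 0 ≤ k := by
  set u := L ![1, 0, 0, 0]
  set v := L ![0, 1, 0, 0]
  have hplane : ∀ p q : ℝ, Qmink (p • u + q • v) = -k * (p ^ 2 + q ^ 2) := by
    intro p q
    rw [← map_smul, ← map_smul, ← map_add, hk]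
    simp only [Qmink, Pi.add_apply, Pi.smul_apply, smul_eq_mul, Matrix.cons_val]
    ring
  have hu := (hplane 1 0).symm.trans_le (Qmink_le_sq _)
  have hv := (hplane 0 1).symm.trans_le (Qmink_le_sq _)
  -- `v 3 • u - u 3 • v` is spatial
  have huv := (hplane (v 3) (-u 3)).symm.trans_le (Qmink_le_sq _)
  simp only [Pi.add_apply, Pi.smul_apply, smul_eq_mul] at hu hv huv
  by_contra hneg
  nlinarith [sq_nonneg (u 3), sq_nonneg (v 3)]

theorem ne_zero_of_Qmink_map_eq_mul (hL : Function.Surjective L) {k : ℝ}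
    (hk : ∀ z, Qmink (L z) = k * Qmink z) : k ≠ 0 := by
  obtain ⟨p, hp⟩ := hL e4
  have h := hk p
  rw [hp] at h
  rintro rfl
  simp [Qmink, e4, Fin.ext_iff] at h

end

theorem lightcone_preserving_affine_scales_minkowski
    (A : (Fin 4 → ℝ) → (Fin 4 → ℝ)) (hAff : IsAffineMap4 A)
    (hBij : Function.Bijective A)
    (hLight : ∀ x y, mtime x y = mdist x y → mtime (A x) (A y) = mdist (A x) (A y)) :
    ∃ k : ℝ, 0 < k ∧ ∀ x y,
      mtime (A x) (A y) ^ 2 - mdist (A x) (A y) ^ 2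
        = k * (mtime x y ^ 2 - mdist x y ^ 2) := by
  obtain ⟨L, b, hA⟩ := hAff
  have hdiff : ∀ x y, A x - A y = L (x - y) := by
    intro x y
    rw [hA, hA, map_sub, add_sub_add_right_eq_sub]
  have hnull : ∀ v, Qmink v = 0 → Qmink (L v) = 0 := by
    intro v hv
    have := hLight v 0 ((mtime_eq_mdist_iff v 0).2 (by rwa [sub_zero]))
    rwa [mtime_eq_mdist_iff, hdiff, sub_zero] at this
  have hsurj : Function.Surjective L := by
    intro w
    obtain ⟨x, hx⟩ := hBij.2 (w + b)
    exact ⟨x, add_right_cancel (by rw [← hA, hx])⟩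
  have hscale := Qmink_map_eq_of_preserves_null L hnull
  refine ⟨Qmink (L e4), (nonneg_of_Qmink_map_eq_mul L hscale).lt_of_ne
    (ne_zero_of_Qmink_map_eq_mul L hsurj hscale).symm, fun x y => ?_⟩
  rw [mtime_sq_sub_mdist_sq, mtime_sq_sub_mdist_sq, hdiff, hscale]
end
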